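/- arXiv:2502.19878 — 3 statements merged into one kernel-verified Lean document; each statement's English description precedes it below -/
import Mathlib

section
/- Let A be the 3×3 matrix [[-a1,0,0],[g1,-a2,0],[0,g2,-a3]] with distinct constants a1,a2,a3>0 and gains g1,g2>0, B=(1,0,0)ᵀ, C=(0,0,1), and let Φ, F : ℝ → ℝ be modulation functions with Φ(·) > 0. A vector X ∈ ℝ³ is a fixed point of the map Q(ξ) = exp(A·Φ(Cξ))·(ξ + F(Cξ)B) if and only if X = λ·(exp(−TA) − I)^{−1}·B, where T = Φ(CX) and λ = F(CX). -/
open Matrix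

noncomputable section

/-- State matrix of the linear pharmacokinetic block. -/
def Amat (a1 a2 a3 g1 g2 : ℝ) : Matrix (Fin 3) (Fin 3) ℝ :=
  !![-a1, 0, 0; g1, -a2, 0; 0, g2, -a3]

/-- Input direction of the impulsive doses. -/
def Bvec : Fin 3 → ℝ := ![1, 0, 0]

/-- Output row vector. -/
def Cvec : Fin 3 → ℝ := ![0, 0, 1]

/-- The pointwise (stroboscopic) map of the hybrid pulse-modulated system. -/
def Qmap (a1 a2 a3 g1 g2 : ℝ) (Φ F : ℝ → ℝ) (ξ : Fin 3 → ℝ) : Fin 3 → ℝ :=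
  (NormedSpace.exp ((Φ (Cvec ⬝ᵥ ξ)) • Amat a1 a2 a3 g1 g2)).mulVec
    (ξ + F (Cvec ⬝ᵥ ξ) • Bvec)

/-!
The map is `ξ ↦ E (ξ + λ B)` with `E = exp (T A)` invertible and `E⁻¹ = exp (-T A)`, so a fixed
point is exactly a solution of `(exp (-T A) - 1) X = λ B`. The distinct eigenvalues `-aᵢ` make `A`
diagonalizable, hence `det (exp (-T A) - 1) = ∏ (exp (T aᵢ) - 1) > 0` and the system has the
unique solution `X = λ (exp (-T A) - 1)⁻¹ B`.
-/

namespace Matrix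

variable {n R : Type*} [Fintype n] [DecidableEq n]

theorem mulVec_add_eq_self_iff [CommRing R] {E : Matrix n n R} (hE : IsUnit E)
    (h : IsUnit (E⁻¹ - 1)) (x b : n → R) :
    E *ᵥ (x + b) = x ↔ x = (E⁻¹ - 1)⁻¹ *ᵥ b := by
  have hE' := (isUnit_iff_isUnit_det E).1 hE
  have h' := (isUnit_iff_isUnit_det _).1 h
  calc E *ᵥ (x + b) = x ↔ x + b = E⁻¹ *ᵥ x := by
        constructor <;> intro hx
        · conv_rhs => rw [← hx]
          rw [mulVec_mulVec, nonsing_inv_mul _ hE', one_mulVec]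
        · rw [hx, mulVec_mulVec, mul_nonsing_inv _ hE', one_mulVec]
    _ ↔ (E⁻¹ - 1) *ᵥ x = b := by
        rw [sub_mulVec, one_mulVec, sub_eq_iff_eq_add', add_comm, eq_comm]
    _ ↔ x = (E⁻¹ - 1)⁻¹ *ᵥ b := by
        constructor <;> rintro rfl
        · rw [mulVec_mulVec, nonsing_inv_mul _ h', one_mulVec]
        · rw [mulVec_mulVec, mul_nonsing_inv _ h', one_mulVec]

theorem det_exp_conj_diagonal_sub_one {P : Matrix n n ℝ} (hP : IsUnit P) (d : n → ℝ) :
    (NormedSpace.exp (P * diagonal d * P⁻¹) - 1).det = ∏ i, (Real.exp (d i) - 1) := by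
  have hP' := (isUnit_iff_isUnit_det P).1 hP
  rw [exp_conj _ _ hP, exp_diagonal, Pi.exp_def, ← Real.exp_eq_exp_ℝ,
    show (1 : Matrix n n ℝ) = P * 1 * P⁻¹ by rw [mul_one, mul_nonsing_inv _ hP'],
    ← sub_mul, ← mul_sub, ← diagonal_one, diagonal_sub, det_conj hP, det_diagonal]

end Matrix

def Pmat (a1 a2 a3 g1 g2 : ℝ) : Matrix (Fin 3) (Fin 3) ℝ :=
  !![(a2 - a1) * (a3 - a1), 0, 0; g1 * (a3 - a1), a3 - a2, 0; g1 * g2, g2, 1]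

theorem Amat_mul_Pmat (a1 a2 a3 g1 g2 : ℝ) :
    Amat a1 a2 a3 g1 g2 * Pmat a1 a2 a3 g1 g2 =
      Pmat a1 a2 a3 g1 g2 * diagonal ![-a1, -a2, -a3] := by
  ext i j
  fin_cases i <;> fin_cases j <;>
    simp [Amat, Pmat, mul_apply, Fin.sum_univ_three] <;> ring

theorem isUnit_Pmat {a1 a2 a3 : ℝ} (h12 : a1 ≠ a2) (h13 : a1 ≠ a3) (h23 : a2 ≠ a3)
    (g1 g2 : ℝ) : IsUnit (Pmat a1 a2 a3 g1 g2) := by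
  have hdet : (Pmat a1 a2 a3 g1 g2).det = (a2 - a1) * (a3 - a1) * (a3 - a2) := by
    simp [Pmat, det_fin_three]
  rw [isUnit_iff_isUnit_det, hdet, isUnit_iff_ne_zero]
  exact mul_ne_zero (mul_ne_zero (sub_ne_zero.2 h12.symm) (sub_ne_zero.2 h13.symm))
    (sub_ne_zero.2 h23.symm)

theorem smul_Amat_eq_conj_diagonal {a1 a2 a3 : ℝ} (h12 : a1 ≠ a2) (h13 : a1 ≠ a3)
    (h23 : a2 ≠ a3) (g1 g2 s : ℝ) :
    s • Amat a1 a2 a3 g1 g2 =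
      Pmat a1 a2 a3 g1 g2 * diagonal (s • ![-a1, -a2, -a3]) * (Pmat a1 a2 a3 g1 g2)⁻¹ := by
  have hP := (isUnit_iff_isUnit_det _).1 (isUnit_Pmat h12 h13 h23 g1 g2)
  rw [diagonal_smul, Matrix.mul_smul, Matrix.smul_mul, ← Amat_mul_Pmat,
    mul_nonsing_inv_cancel_right _ _ hP]

theorem isUnit_exp_neg_smul_Amat_sub_one {a1 a2 a3 : ℝ} (ha1 : 0 < a1) (ha2 : 0 < a2)
    (ha3 : 0 < a3) (h12 : a1 ≠ a2) (h13 : a1 ≠ a3) (h23 : a2 ≠ a3) (g1 g2 : ℝ) {T : ℝ}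
    (hT : 0 < T) : IsUnit (NormedSpace.exp ((-T) • Amat a1 a2 a3 g1 g2) - 1) := by
  rw [isUnit_iff_isUnit_det, smul_Amat_eq_conj_diagonal h12 h13 h23,
    det_exp_conj_diagonal_sub_one (isUnit_Pmat h12 h13 h23 g1 g2), isUnit_iff_ne_zero,
    Finset.prod_ne_zero_iff]
  intro i _
  have hpos : 0 < ((-T) • ![-a1, -a2, -a3]) i := by
    fin_cases i <;> simp <;> positivity
  exact (sub_pos.2 (Real.one_lt_exp_iff.2 hpos)).ne'

theorem stmt5_general (a1 a2 a3 g1 g2 : ℝ) (ha1 : 0 < a1) (ha2 : 0 < a2) (ha3 : 0 < a3)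
    (h12 : a1 ≠ a2) (h13 : a1 ≠ a3) (h23 : a2 ≠ a3)
    (Φ F : ℝ → ℝ) (hΦpos : ∀ y : ℝ, 0 < Φ y)
    (X : Fin 3 → ℝ) (T lam : ℝ) (hT : T = Φ (Cvec ⬝ᵥ X)) (hlam : lam = F (Cvec ⬝ᵥ X)) :
    Qmap a1 a2 a3 g1 g2 Φ F X = X ↔
      X = lam • ((NormedSpace.exp ((-T) • Amat a1 a2 a3 g1 g2) - 1)⁻¹).mulVec Bvec := by
  have hinv : (NormedSpace.exp (T • Amat a1 a2 a3 g1 g2))⁻¹ =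
      NormedSpace.exp ((-T) • Amat a1 a2 a3 g1 g2) := by
    rw [neg_smul, exp_neg]
  have hTpos : 0 < T := hT ▸ hΦpos _
  have hfix := isUnit_exp_neg_smul_Amat_sub_one ha1 ha2 ha3 h12 h13 h23 g1 g2 hTpos
  rw [← hinv] at hfix ⊢
  rw [Qmap, ← hT, ← hlam, ← mulVec_smul]
  exact mulVec_add_eq_self_iff (isUnit_exp (T • Amat a1 a2 a3 g1 g2)) hfix X (lam • Bvec)

/-- `X` is a fixed point of `Q` if and only if
`X = λ·(exp(−TA) − I)^{−1}·B` with `T = Φ(CX)` and `λ = F(CX)`. -/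
theorem stmt5 (a1 a2 a3 g1 g2 : ℝ) (ha1 : 0 < a1) (ha2 : 0 < a2) (ha3 : 0 < a3)
    (h12 : a1 ≠ a2) (h13 : a1 ≠ a3) (h23 : a2 ≠ a3) (hg1 : 0 < g1) (hg2 : 0 < g2)
    (Φ F : ℝ → ℝ) (hΦpos : ∀ y : ℝ, 0 < Φ y)
    (X : Fin 3 → ℝ) (T lam : ℝ) (hT : T = Φ (Cvec ⬝ᵥ X)) (hlam : lam = F (Cvec ⬝ᵥ X)) :
    Qmap a1 a2 a3 g1 g2 Φ F X = X ↔
      X = lam • ((NormedSpace.exp ((-T) • Amat a1 a2 a3 g1 g2) - 1)⁻¹).mulVec Bvec :=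
  stmt5_general a1 a2 a3 g1 g2 ha1 ha2 ha3 h12 h13 h23 Φ F hΦpos X T lam hT hlam
end
end

section
/- Let A be the 3×3 matrix [[-a1,0,0],[g1,-a2,0],[0,g2,-a3]] with distinct constants a1,a2,a3>0 and gains g1,g2>0 and B=(1,0,0)ᵀ. For every T > 0 and λ > 0, all three components of the vector λ·(exp(−TA) − I)^{−1}·B are strictly positive. -/
/-!
Distinct eigenvalues make `A` diagonalizable, `A = P diag(-a₁, -a₂, -a₃) P⁻¹`, so
`(exp(-TA) - I)⁻¹ B = P diag(f a₁, f a₂, f a₃) P⁻¹ B` with `f x = (e^{Tx} - 1)⁻¹`. Reading off the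
triangular eigenvector matrix, the three components are `f a₁`, `-g₁ f[a₁, a₂]` and
`g₁ g₂ f[a₁, a₂, a₃]`, where `f[⋯]` are divided differences. They are positive because `f` is
positive, strictly decreasing and strictly convex on `(0, ∞)`.
-/

open Matrix

noncomputable section

open Set

section ExpSubOneInv

def expSubOneInv (T x : ℝ) : ℝ := (Real.exp (T * x) - 1)⁻¹

variable {T : ℝ}

lemma one_lt_exp_mul (hT : 0 < T) {x : ℝ} (hx : 0 < x) : 1 < Real.exp (T * x) :=
  Real.one_lt_exp_iff.2 (mul_pos hT hx)

lemma expSubOneInv_pos (hT : 0 < T) {x : ℝ} (hx : 0 < x) : 0 < expSubOneInv T x :=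
  inv_pos.2 (sub_pos.2 (one_lt_exp_mul hT hx))

lemma strictAntiOn_expSubOneInv (hT : 0 < T) : StrictAntiOn (expSubOneInv T) (Ioi 0) := by
  intro x hx y _ hxy
  refine inv_strictAnti₀ (sub_pos.2 (one_lt_exp_mul hT hx)) ?_
  gcongr

lemma hasDerivAt_expSubOneInv (hT : 0 < T) {x : ℝ} (hx : 0 < x) :
    HasDerivAt (expSubOneInv T) (-T * (expSubOneInv T x + expSubOneInv T x ^ 2)) x := by
  have hne : Real.exp (T * x) - 1 ≠ 0 := (sub_pos.2 (one_lt_exp_mul hT hx)).ne'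
  have h : HasDerivAt (fun x => Real.exp (T * x) - 1) (Real.exp (T * x) * T) x := by
    simpa using ((hasDerivAt_id x).const_mul T).exp.sub_const 1
  refine (h.inv hne).congr_deriv ?_
  simp only [expSubOneInv]
  field_simp
  ring

lemma strictConvexOn_expSubOneInv (hT : 0 < T) : StrictConvexOn ℝ (Ioi 0) (expSubOneInv T) := by
  refine StrictMonoOn.strictConvexOn_of_deriv (convex_Ioi 0)
    (fun x hx => (hasDerivAt_expSubOneInv hT hx).continuousAt.continuousWithinAt) ?_
  rw [interior_Ioi]
  intro x hx y hy hxy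
  rw [(hasDerivAt_expSubOneInv hT hx).deriv, (hasDerivAt_expSubOneInv hT hy).deriv]
  have hfy := expSubOneInv_pos hT hy
  have hfxy := strictAntiOn_expSubOneInv hT hx hy hxy
  have : expSubOneInv T y + expSubOneInv T y ^ 2 < expSubOneInv T x + expSubOneInv T x ^ 2 := by
    nlinarith
  simpa only [neg_mul, neg_lt_neg_iff] using mul_lt_mul_of_pos_left this hT

end ExpSubOneInv

lemma StrictAntiOn.div_sub_pos {s : Set ℝ} {f : ℝ → ℝ} (hf : StrictAntiOn f s) {x y : ℝ}
    (hx : x ∈ s) (hy : y ∈ s) (hxy : x ≠ y) : 0 < (f x - f y) / (y - x) := by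
  rcases hxy.lt_or_gt with h | h
  · exact div_pos (sub_pos.2 (hf hx hy h)) (sub_pos.2 h)
  · exact div_pos_of_neg_of_neg (sub_neg.2 (hf hy hx h)) (sub_neg.2 h)

lemma StrictConvexOn.secant_sub_secant_div_pos {s : Set ℝ} {f : ℝ → ℝ}
    (hf : StrictConvexOn ℝ s f) {a x y : ℝ} (ha : a ∈ s) (hx : x ∈ s) (hy : y ∈ s)
    (hxa : x ≠ a) (hya : y ≠ a) (hxy : x ≠ y) :
    0 < ((f y - f a) / (y - a) - (f x - f a) / (x - a)) / (y - x) := by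
  rcases hxy.lt_or_gt with h | h
  · exact div_pos (sub_pos.2 (hf.secant_strict_mono ha hx hy hxa hya h)) (sub_pos.2 h)
  · exact div_pos_of_neg_of_neg (sub_neg.2 (hf.secant_strict_mono ha hy hx hya hxa h))
      (sub_neg.2 h)

lemma Matrix.inv_exp_conj_diagonal_sub_one {n : Type*} [Fintype n] [DecidableEq n]
    {P Q : Matrix n n ℝ} (hPQ : P * Q = 1) {d : n → ℝ} (hd : ∀ i, d i ≠ 0) :
    (NormedSpace.exp (P * diagonal d * Q) - 1)⁻¹
      = P * diagonal (fun i => (Real.exp (d i) - 1)⁻¹) * Q := by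
  have hQP : Q * P = 1 := mul_eq_one_comm.1 hPQ
  have hexp : NormedSpace.exp (P * diagonal d * Q) = P * NormedSpace.exp (diagonal d) * Q :=
    Matrix.exp_units_conj ⟨P, Q, hPQ, hQP⟩ _
  have hdiag : (diagonal (NormedSpace.exp d) - 1) * diagonal (fun i => (Real.exp (d i) - 1)⁻¹)
      = 1 := by
    rw [← diagonal_one, diagonal_sub, diagonal_mul_diagonal]
    congr 1
    funext i
    have : Real.exp (d i) - 1 ≠ 0 := sub_ne_zero.2 (by simpa using hd i)
    simpa [Pi.exp_def, ← Real.exp_eq_exp_ℝ] using mul_inv_cancel₀ this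
  have hsub : P * diagonal (NormedSpace.exp d) * Q - 1 =
      P * (diagonal (NormedSpace.exp d) - 1) * Q := by
    rw [Matrix.mul_sub, Matrix.sub_mul, Matrix.mul_one, hPQ]
  rw [hexp, exp_diagonal, hsub]
  refine inv_eq_right_inv ?_
  calc _ = P * ((diagonal (NormedSpace.exp d) - 1) * (Q * P) *
        diagonal (fun i => (Real.exp (d i) - 1)⁻¹)) * Q := by
        simp only [Matrix.mul_assoc]
    _ = 1 := by rw [hQP, Matrix.mul_one, hdiag, Matrix.mul_one, hPQ]

section Eigenbasis

variable {a1 a2 a3 g1 g2 : ℝ}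

def eigvecMat (a1 a2 a3 g1 g2 : ℝ) : Matrix (Fin 3) (Fin 3) ℝ :=
  !![1, 0, 0; g1 / (a2 - a1), 1, 0; g1 * g2 / ((a2 - a1) * (a3 - a1)), g2 / (a3 - a2), 1]

def eigvecMatInv (a1 a2 a3 g1 g2 : ℝ) : Matrix (Fin 3) (Fin 3) ℝ :=
  !![1, 0, 0; -(g1 / (a2 - a1)), 1, 0; g1 * g2 / ((a3 - a1) * (a3 - a2)), -(g2 / (a3 - a2)), 1]

lemma eigvecMat_mul_eigvecMatInv (h12 : a1 ≠ a2) (h13 : a1 ≠ a3) (h23 : a2 ≠ a3) :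
    eigvecMat a1 a2 a3 g1 g2 * eigvecMatInv a1 a2 a3 g1 g2 = 1 := by
  ext i j
  fin_cases i <;> fin_cases j <;>
    simp [eigvecMat, eigvecMatInv, Matrix.mul_apply, Fin.sum_univ_three]
  field_simp
  ring

lemma Amat_eq_conj (h12 : a1 ≠ a2) (h13 : a1 ≠ a3) (h23 : a2 ≠ a3) :
    Amat a1 a2 a3 g1 g2 =
    eigvecMat a1 a2 a3 g1 g2 * diagonal ![-a1, -a2, -a3] * eigvecMatInv a1 a2 a3 g1 g2 := by
  ext i j
  fin_cases i <;> fin_cases j <;>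
    simp [eigvecMat, eigvecMatInv, Amat, Matrix.mul_apply, Fin.sum_univ_three, vecMul_diagonal] <;>
    field_simp <;> ring

lemma eigvecMat_conj_diagonal_mulVec_Bvec (h12 : a1 ≠ a2) (h13 : a1 ≠ a3) (h23 : a2 ≠ a3)
    (f : ℝ → ℝ) :
    (eigvecMat a1 a2 a3 g1 g2 * diagonal (fun i => f (![a1, a2, a3] i)) *
        eigvecMatInv a1 a2 a3 g1 g2) *ᵥ Bvec =
      ![f a1, g1 * ((f a1 - f a2) / (a2 - a1)),
        g1 * g2 * (((f a3 - f a2) / (a3 - a2) - (f a1 - f a2) / (a1 - a2)) / (a3 - a1))] := by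
  ext i
  simp only [mulVec, dotProduct, Bvec, Fin.sum_univ_three, Matrix.mul_apply, diagonal_apply]
  fin_cases i <;>
    simp [eigvecMat, eigvecMatInv] <;>
    field_simp <;> ring

end Eigenbasis

/-- for every `T > 0` and `λ > 0`, all three components of the 1-cycle
fixed point `λ·(exp(−TA) − I)^{−1}·B` are strictly positive. -/
theorem stmt6 (a1 a2 a3 g1 g2 : ℝ) (ha1 : 0 < a1) (ha2 : 0 < a2) (ha3 : 0 < a3)
    (h12 : a1 ≠ a2) (h13 : a1 ≠ a3) (h23 : a2 ≠ a3) (hg1 : 0 < g1) (hg2 : 0 < g2)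
    (T lam : ℝ) (hT : 0 < T) (hlam : 0 < lam) :
    ∀ i : Fin 3,
      0 < (lam • ((NormedSpace.exp ((-T) • Amat a1 a2 a3 g1 g2) - 1)⁻¹).mulVec Bvec) i := by
  have hA : (-T) • Amat a1 a2 a3 g1 g2 = eigvecMat a1 a2 a3 g1 g2 *
      diagonal (fun i => T * ![a1, a2, a3] i) * eigvecMatInv a1 a2 a3 g1 g2 := by
    rw [Amat_eq_conj h12 h13 h23, ← Matrix.smul_mul, ← Matrix.mul_smul, ← diagonal_smul]
    congr 3
    funext i
    fin_cases i <;> simp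
  have ha : ∀ i, 0 < ![a1, a2, a3] i := by
    intro i
    fin_cases i <;> assumption
  have hf : (fun i => (Real.exp (T * ![a1, a2, a3] i) - 1)⁻¹) =
      fun i => expSubOneInv T (![a1, a2, a3] i) := rfl
  rw [hA, inv_exp_conj_diagonal_sub_one (eigvecMat_mul_eigvecMatInv h12 h13 h23)
    (fun i => (mul_pos hT (ha i)).ne'), hf,
    eigvecMat_conj_diagonal_mulVec_Bvec h12 h13 h23 (expSubOneInv T)]
  intro i
  fin_cases i <;> simp only [Pi.smul_apply, smul_eq_mul] <;> refine mul_pos hlam ?_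
  · exact expSubOneInv_pos hT ha1
  · exact mul_pos hg1 ((strictAntiOn_expSubOneInv hT).div_sub_pos ha1 ha2 h12)
  · exact mul_pos (mul_pos hg1 hg2) ((strictConvexOn_expSubOneInv hT).secant_sub_secant_div_pos
      ha2 ha1 ha3 h12 h23.symm h13)
end
end

section
/- Let A be the 3×3 matrix [[-a1,0,0],[g1,-a2,0],[0,g2,-a3]] with distinct constants a1,a2,a3>0 and gains g1,g2>0, B=(1,0,0)ᵀ, C=(0,0,1), and let Φ, F : ℝ → ℝ satisfy Φ(·) ≥ Φ1 > 0 and F(·) ≥ F1 > 0. Then the positive orthant is forward invariant and attracting in one step for the map Q(ξ) = exp(A·Φ(Cξ))·(ξ + F(Cξ)B): for every ξ ∈ ℝ³ with all components nonnegative, all three components of Q(ξ) are strictly positive. -/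
/-!
A Metzler matrix `A` (nonnegative off the diagonal) becomes entrywise nonnegative after adding
`c • 1` for `c` large, and `exp A = exp (-c) • exp (A + c • 1)`. Hence every entry of `exp A`
dominates a positive multiple of the corresponding entry of each power `(A + c • 1) ^ k`. For
`s • A` with `s = Φ(Cξ) > 0`, the chain `0 → 1 → 2` of positive gains `s g₁`, `s g₂` makes the
first column of `exp (s • A)` strictly positive, and the dose `F(Cξ) ≥ F₁ > 0` makes the first
component of `ξ + F(Cξ) B` strictly positive.
-/

open Matrix Nat

noncomputable section

namespace Matrix

variable {n : Type*} [Fintype n]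

theorem mulVec_apply_pos {R : Type*} [Semiring R] [PartialOrder R] [IsStrictOrderedRing R]
    {M : Matrix n n R} {x : n → R} (hM : ∀ i j, 0 ≤ M i j) (hx : ∀ j, 0 ≤ x j) {i j : n}
    (hMij : 0 < M i j) (hxj : 0 < x j) : 0 < (M *ᵥ x) i :=
  Finset.sum_pos' (fun k _ => mul_nonneg (hM i k) (hx k))
    ⟨j, Finset.mem_univ j, mul_pos hMij hxj⟩

variable [DecidableEq n]

theorem apply_mul_apply_le_sq_apply {R : Type*} [Semiring R] [PartialOrder R] [IsOrderedRing R]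
    {M : Matrix n n R} (hM : ∀ i j, 0 ≤ M i j) (i k j : n) : M i k * M k j ≤ (M ^ 2) i j := by
  rw [sq, mul_apply]
  exact Finset.single_le_sum (f := fun l => M i l * M l j)
    (fun l _ => mul_nonneg (hM i l) (hM l j)) (Finset.mem_univ k)

theorem hasSum_exp_apply (M : Matrix n n ℝ) (i j : n) :
    HasSum (fun k : ℕ => (k !⁻¹ : ℝ) * (M ^ k) i j) (NormedSpace.exp M i j) := by
  open scoped Norms.Operator in
  have h := NormedSpace.exp_series_hasSum_exp' (𝕂 := ℝ) M
  exact Pi.hasSum.mp (Pi.hasSum.mp h i) j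

theorem exp_add_smul_one (M : Matrix n n ℝ) (c : ℝ) :
    NormedSpace.exp (M + c • 1) = Real.exp c • NormedSpace.exp M := by
  have hc : NormedSpace.exp (c • 1 : Matrix n n ℝ) = Real.exp c • 1 := by
    rw [smul_one_eq_diagonal, exp_diagonal, smul_one_eq_diagonal, Pi.exp_def, Real.exp_eq_exp_ℝ]
  rw [exp_add_of_commute _ _ ((Commute.one_right M).smul_right c), hc, Matrix.mul_smul, mul_one]

theorem exp_apply_nonneg_of_nonneg {M : Matrix n n ℝ} (hM : ∀ i j, 0 ≤ M i j) (i j : n) :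
    0 ≤ NormedSpace.exp M i j :=
  (hasSum_exp_apply M i j).nonneg fun k => mul_nonneg (by positivity) (pow_apply_nonneg hM k i j)

theorem exp_apply_pos_of_pow_apply_pos {M : Matrix n n ℝ} (hM : ∀ i j, 0 ≤ M i j) {k : ℕ}
    {i j : n} (hk : 0 < (M ^ k) i j) : 0 < NormedSpace.exp M i j := by
  have hterm : 0 < (k !⁻¹ : ℝ) * (M ^ k) i j := mul_pos (by positivity) hk
  exact hterm.trans_le <| (hasSum_exp_apply M i j).summable.le_tsum k
    (fun l _ => mul_nonneg (by positivity) (pow_apply_nonneg hM l i j))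
    |>.trans_eq (hasSum_exp_apply M i j).tsum_eq

def IsMetzler (A : Matrix n n ℝ) : Prop :=
  ∀ i j, i ≠ j → 0 ≤ A i j

namespace IsMetzler

variable {A : Matrix n n ℝ}

theorem add_smul_one_nonneg (hA : A.IsMetzler) (i j : n) :
    0 ≤ (A + (∑ l, |A l l|) • 1) i j := by
  by_cases hij : i = j
  · subst hij
    have hi : |A i i| ≤ ∑ l, |A l l| :=
      Finset.single_le_sum (f := fun l => |A l l|) (fun l _ => abs_nonneg _) (Finset.mem_univ i)
    simp only [add_apply, smul_apply, one_apply_eq, smul_eq_mul, mul_one]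
    linarith [neg_abs_le (A i i)]
  · simpa [one_apply_ne hij] using hA i j hij

theorem exp_eq (A : Matrix n n ℝ) (c : ℝ) :
    NormedSpace.exp A = Real.exp (-c) • NormedSpace.exp (A + c • 1) := by
  rw [exp_add_smul_one, smul_smul, ← Real.exp_add, neg_add_cancel, Real.exp_zero, one_smul]

theorem exp_apply_nonneg (hA : A.IsMetzler) (i j : n) : 0 ≤ NormedSpace.exp A i j := by
  rw [exp_eq A (∑ l, |A l l|), smul_apply, smul_eq_mul]
  exact mul_nonneg (Real.exp_pos _).le (exp_apply_nonneg_of_nonneg hA.add_smul_one_nonneg i j)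

theorem exp_apply_pos_of_shift_pow_apply_pos (hA : A.IsMetzler) {k : ℕ} {i j : n}
    (hk : 0 < ((A + (∑ l, |A l l|) • 1) ^ k) i j) : 0 < NormedSpace.exp A i j := by
  rw [exp_eq A (∑ l, |A l l|), smul_apply, smul_eq_mul]
  exact mul_pos (Real.exp_pos _) (exp_apply_pos_of_pow_apply_pos hA.add_smul_one_nonneg hk)

theorem exp_apply_self_pos (hA : A.IsMetzler) (i : n) : 0 < NormedSpace.exp A i i :=
  hA.exp_apply_pos_of_shift_pow_apply_pos (k := 0) (by simp)

theorem exp_apply_pos_of_apply_pos (hA : A.IsMetzler) {i j : n} (hij : i ≠ j)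
    (h : 0 < A i j) : 0 < NormedSpace.exp A i j :=
  hA.exp_apply_pos_of_shift_pow_apply_pos (k := 1) (by simpa [one_apply_ne hij] using h)

theorem exp_apply_pos_of_apply_pos_of_apply_pos (hA : A.IsMetzler) {i k j : n} (hik : i ≠ k)
    (hkj : k ≠ j) (hi : 0 < A i k) (hj : 0 < A k j) : 0 < NormedSpace.exp A i j := by
  refine hA.exp_apply_pos_of_shift_pow_apply_pos (k := 2) ?_
  refine lt_of_lt_of_le ?_ (apply_mul_apply_le_sq_apply hA.add_smul_one_nonneg i k j)
  simpa [one_apply_ne hik, one_apply_ne hkj] using mul_pos hi hj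

end IsMetzler

end Matrix

theorem isMetzler_smul_Amat {a1 a2 a3 g1 g2 s : ℝ} (hs : 0 ≤ s) (hg1 : 0 ≤ g1) (hg2 : 0 ≤ g2) :
    (s • Amat a1 a2 a3 g1 g2).IsMetzler := by
  intro i j hij
  fin_cases i <;> fin_cases j <;> simp_all [Amat, mul_nonneg]

theorem exp_smul_Amat_apply_zero_pos {a1 a2 a3 g1 g2 s : ℝ} (hs : 0 < s) (hg1 : 0 < g1)
    (hg2 : 0 < g2) (i : Fin 3) : 0 < NormedSpace.exp (s • Amat a1 a2 a3 g1 g2) i 0 := by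
  have hA := isMetzler_smul_Amat (a1 := a1) (a2 := a2) (a3 := a3) hs.le hg1.le hg2.le
  have h10 : 0 < (s • Amat a1 a2 a3 g1 g2) 1 0 := by simpa [Amat] using mul_pos hs hg1
  have h21 : 0 < (s • Amat a1 a2 a3 g1 g2) 2 1 := by simpa [Amat] using mul_pos hs hg2
  fin_cases i
  · exact hA.exp_apply_self_pos 0
  · exact hA.exp_apply_pos_of_apply_pos (by decide) h10
  · exact hA.exp_apply_pos_of_apply_pos_of_apply_pos (by decide) (by decide) h21 h10

theorem stmt8_general (a1 a2 a3 g1 g2 : ℝ) (hg1 : 0 < g1) (hg2 : 0 < g2)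
    (Φ F : ℝ → ℝ) (Φ1 F1 : ℝ) (hΦ1 : 0 < Φ1) (hF1 : 0 < F1)
    (hΦ : ∀ y : ℝ, Φ1 ≤ Φ y) (hF : ∀ y : ℝ, F1 ≤ F y) :
    ∀ ξ : Fin 3 → ℝ, (∀ i, 0 ≤ ξ i) → ∀ i, 0 < Qmap a1 a2 a3 g1 g2 Φ F ξ i := by
  intro ξ hξ i
  have hs : 0 < Φ (Cvec ⬝ᵥ ξ) := hΦ1.trans_le (hΦ _)
  have hdose : 0 < F (Cvec ⬝ᵥ ξ) := hF1.trans_le (hF _)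
  have hx : ∀ j, 0 ≤ (ξ + F (Cvec ⬝ᵥ ξ) • Bvec) j := fun j =>
    add_nonneg (hξ j) (mul_nonneg hdose.le (by fin_cases j <;> simp [Bvec]))
  have hx0 : 0 < (ξ + F (Cvec ⬝ᵥ ξ) • Bvec) 0 := by
    simpa [Bvec] using add_pos_of_nonneg_of_pos (hξ 0) hdose
  exact mulVec_apply_pos (isMetzler_smul_Amat hs.le hg1.le hg2.le).exp_apply_nonneg hx
    (exp_smul_Amat_apply_zero_pos hs hg1 hg2 i) hx0

/-- if `Φ(·) ≥ Φ1 > 0` and `F(·) ≥ F1 > 0`, then for every `ξ` with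
nonnegative components all three components of `Q(ξ)` are strictly positive. -/
theorem stmt8 (a1 a2 a3 g1 g2 : ℝ) (ha1 : 0 < a1) (ha2 : 0 < a2) (ha3 : 0 < a3)
    (h12 : a1 ≠ a2) (h13 : a1 ≠ a3) (h23 : a2 ≠ a3) (hg1 : 0 < g1) (hg2 : 0 < g2)
    (Φ F : ℝ → ℝ) (Φ1 F1 : ℝ) (hΦ1 : 0 < Φ1) (hF1 : 0 < F1)
    (hΦ : ∀ y : ℝ, Φ1 ≤ Φ y) (hF : ∀ y : ℝ, F1 ≤ F y) :
    ∀ ξ : Fin 3 → ℝ, (∀ i, 0 ≤ ξ i) → ∀ i, 0 < Qmap a1 a2 a3 g1 g2 Φ F ξ i :=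
  stmt8_general a1 a2 a3 g1 g2 hg1 hg2 Φ F Φ1 F1 hΦ1 hF1 hΦ hF
end
end
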